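/- arXiv:2110.13604 — 3 statements merged into one kernel-verified Lean document; each statement's English description precedes it below -/
import Mathlib

section
/- Pointwise form of Proposition 2.1 (transformed bending energy density): Let ω ⊆ ℝ² be open, let ψ_A, ψ_B : ℝ² → ℝ³ be twice continuously differentiable on ω, and suppose the metric constraint (∇ψ_B(y))ᵀ∇ψ_B(y) = (∇ψ_A(y))ᵀ∇ψ_A(y) holds for all y ∈ ω. Let x ∈ ω be such that ∂₁ψ_A(x) × ∂₂ψ_A(x) ≠ 0 and ∂₁ψ_B(x) × ∂₂ψ_B(x) ≠ 0, and write g = g[ψ_A](x), II_A = II[ψ_A](x), II_B = II[ψ_B](x). Then |g^{-1/2}(II_B − II_A)g^{-1/2}|² = Σ_{m=1}^{3} |g^{-1/2} D²ψ_Bᵐ(x) g^{-1/2}|² − 2 II_B : (g⁻¹ II_A g⁻¹) + C_A(x), where C_A(x) = 2 |g^{-1/2} II_A g^{-1/2}|² − Σ_{m=1}^{3} |g^{-1/2} D²ψ_Aᵐ(x) g^{-1/2}|² depends only on ψ_A. -/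
open Matrix MeasureTheory

noncomputable section

/-- `i`-th partial derivative of `ψ : ℝ² → ℝ³` at `x`. -/
def pd (ψ : (Fin 2 → ℝ) → (Fin 3 → ℝ)) (i : Fin 2) (x : Fin 2 → ℝ) : Fin 3 → ℝ :=
  fderiv ℝ ψ x (Pi.single i 1)

/-- Jacobian matrix `∇ψ(x) ∈ ℝ^{3×2}`. -/
def jac (ψ : (Fin 2 → ℝ) → (Fin 3 → ℝ)) (x : Fin 2 → ℝ) : Matrix (Fin 3) (Fin 2) ℝ :=
  Matrix.of fun m i => pd ψ i x m

/-- First fundamental form `g[ψ](x) = (∇ψ(x))ᵀ ∇ψ(x)`. -/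
def met (ψ : (Fin 2 → ℝ) → (Fin 3 → ℝ)) (x : Fin 2 → ℝ) : Matrix (Fin 2) (Fin 2) ℝ :=
  (jac ψ x)ᵀ * jac ψ x

/-- Euclidean inner product on `ℝ³`. -/
def dot3 (u v : Fin 3 → ℝ) : ℝ := ∑ m, u m * v m

/-- Euclidean norm on `ℝ³`. -/
def norm3 (u : Fin 3 → ℝ) : ℝ := Real.sqrt (dot3 u u)

/-- Cross product `∂₁ψ(x) × ∂₂ψ(x)`. -/
def crossPsi (ψ : (Fin 2 → ℝ) → (Fin 3 → ℝ)) (x : Fin 2 → ℝ) : Fin 3 → ℝ :=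
  crossProduct (pd ψ 0 x) (pd ψ 1 x)

/-- Unit normal `n[ψ](x)`. -/
def nrm (ψ : (Fin 2 → ℝ) → (Fin 3 → ℝ)) (x : Fin 2 → ℝ) : Fin 3 → ℝ :=
  (norm3 (crossPsi ψ x))⁻¹ • crossPsi ψ x

/-- Second partial derivative `∂ᵢ∂ⱼψ(x)`. -/
def pd2 (ψ : (Fin 2 → ℝ) → (Fin 3 → ℝ)) (i j : Fin 2) (x : Fin 2 → ℝ) : Fin 3 → ℝ :=
  pd (pd ψ j) i x

/-- Hessian `D²ψᵐ(x)` of the `m`-th component. -/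
def hess (ψ : (Fin 2 → ℝ) → (Fin 3 → ℝ)) (m : Fin 3) (x : Fin 2 → ℝ) :
    Matrix (Fin 2) (Fin 2) ℝ :=
  Matrix.of fun i j => pd2 ψ i j x m

/-- Second fundamental form `II[ψ](x)ᵢⱼ = ∂ᵢ∂ⱼψ(x)·n[ψ](x)`. -/
def sff (ψ : (Fin 2 → ℝ) → (Fin 3 → ℝ)) (x : Fin 2 → ℝ) : Matrix (Fin 2) (Fin 2) ℝ :=
  Matrix.of fun i j => dot3 (pd2 ψ i j x) (nrm ψ x)

/-- Frobenius inner product `A : B`. -/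
def frob {n : Type*} [Fintype n] (A B : Matrix n n ℝ) : ℝ := ∑ i, ∑ j, A i j * B i j

/-- Gram–Schmidt frame vector `y¹[ψ](x)`. -/
def y1 (ψ : (Fin 2 → ℝ) → (Fin 3 → ℝ)) (x : Fin 2 → ℝ) : Fin 3 → ℝ :=
  (norm3 (pd ψ 0 x))⁻¹ • pd ψ 0 x

/-- Gram–Schmidt vector `ŷ²[ψ](x)` (before normalization). -/
def yhat2 (ψ : (Fin 2 → ℝ) → (Fin 3 → ℝ)) (x : Fin 2 → ℝ) : Fin 3 → ℝ :=
  pd ψ 1 x - (dot3 (pd ψ 1 x) (y1 ψ x)) • y1 ψ x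

/-- Gram–Schmidt frame vector `y²[ψ](x)`. -/
def y2 (ψ : (Fin 2 → ℝ) → (Fin 3 → ℝ)) (x : Fin 2 → ℝ) : Fin 3 → ℝ :=
  (norm3 (yhat2 ψ x))⁻¹ • yhat2 ψ x

/-! ### Auxiliary lemmas -/


/-! Writing `M = g^{-1/2}`, the matrices `M D²ψᵐ M` are the components of the vectors
`Wₖₗ = ∑ᵢⱼ Mₖᵢ ∂ᵢ∂ⱼψ Mⱼₗ ∈ ℝ³`, so `∑ₘ |M D²ψᵐ M|² = ∑ₖₗ |Wₖₗ|²`. Splitting each `Wₖₗ` into its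
normal part, which gives `|M II M|²`, and its tangential part, which only involves `g` and the
Christoffel symbols `∂ᵢ∂ⱼψ · ∂ₖψ`, and noting that by the Koszul formula the Christoffel symbols
are determined by the metric, the difference `∑ₘ |M D²ψᵐ M|² - |M II M|²` is the same for the
isometric immersions `ψ_A` and `ψ_B`. Expanding `|M (II_B - II_A) M|²` and moving the factors `M`
across the Frobenius pairing gives the identity. -/

def gram3 (t : Fin 2 → Fin 3 → ℝ) : Matrix (Fin 2) (Fin 2) ℝ :=
  of fun i j => dot3 (t i) (t j)

lemma det_gram3 (t : Fin 2 → Fin 3 → ℝ) :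
    (gram3 t).det = dot3 (t 0 ⨯₃ t 1) (t 0 ⨯₃ t 1) := by
  rw [det_fin_two]
  simp only [gram3, of_apply, dot3, cross_apply, Fin.sum_univ_three, cons_val_zero, cons_val_one,
    cons_val_two, head_cons, tail_cons]
  ring

lemma dot3_self_mul_det_gram3 (t : Fin 2 → Fin 3 → ℝ) (w : Fin 3 → ℝ) :
    dot3 w w * (gram3 t).det
      = dot3 w (t 0 ⨯₃ t 1) ^ 2
        + (fun k => dot3 w (t k)) ⬝ᵥ (gram3 t).adjugate *ᵥ (fun k => dot3 w (t k)) := by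
  rw [det_fin_two, adjugate_fin_two]
  simp only [gram3, of_apply, dot3, cross_apply, Fin.sum_univ_three, dotProduct, mulVec,
    Fin.sum_univ_two, cons_val_zero, cons_val_one, cons_val_two, head_cons, tail_cons, cons_val',
    empty_val', cons_val_fin_one]
  ring

/-- Pythagoras in the frame `(t₀, t₁, n)`: the tangential part of `|w|²` is the `G⁻¹`-norm of the
covector `(w · tₖ)ₖ`. -/
lemma dot3_self_eq_sq_dot3_normal_add (t : Fin 2 → Fin 3 → ℝ) (hc : t 0 ⨯₃ t 1 ≠ 0)
    (w : Fin 3 → ℝ) :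
    dot3 w w = dot3 w ((norm3 (t 0 ⨯₃ t 1))⁻¹ • t 0 ⨯₃ t 1) ^ 2
      + (fun k => dot3 w (t k)) ⬝ᵥ (gram3 t)⁻¹ *ᵥ (fun k => dot3 w (t k)) := by
  have hdet := dot3_self_mul_det_gram3 t w
  rw [inv_def, Ring.inverse_eq_inv', smul_mulVec, dotProduct_smul, smul_eq_mul, det_gram3] at *
  set c := t 0 ⨯₃ t 1
  have hcc : 0 < dot3 c c := dotProduct_self_star_pos_iff.2 hc
  have hnorm : norm3 c ^ 2 = dot3 c c := Real.sq_sqrt hcc.le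
  have hnormal : dot3 w ((norm3 c)⁻¹ • c) = (norm3 c)⁻¹ * dot3 w c := dotProduct_smul _ _ _
  rw [hnormal, mul_pow, inv_pow, hnorm]
  field_simp
  linarith

def dotMat (V : Fin 2 → Fin 2 → Fin 3 → ℝ) (z : Fin 3 → ℝ) : Matrix (Fin 2) (Fin 2) ℝ :=
  of fun i j => dot3 (V i j) z

/-- `∑ₖₗ |Wₖₗ|²` for tangent vectors `Wₖₗ` given by their covariant components
`(M * Γ κ * M) k l = Wₖₗ · t_κ` in a frame `t` with Gram matrix `g`. -/
def tangentialPart (g : Matrix (Fin 2) (Fin 2) ℝ) (Γ : Fin 2 → Matrix (Fin 2) (Fin 2) ℝ)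
    (M : Matrix (Fin 2) (Fin 2) ℝ) : ℝ :=
  ∑ k, ∑ l, (fun κ => (M * Γ κ * M) k l) ⬝ᵥ g⁻¹ *ᵥ (fun κ => (M * Γ κ * M) k l)

lemma mul_dotMat_mul_apply (M : Matrix (Fin 2) (Fin 2) ℝ) (V : Fin 2 → Fin 2 → Fin 3 → ℝ)
    (z : Fin 3 → ℝ) (k l : Fin 2) :
    (M * dotMat V z * M) k l = dot3 (∑ i, ∑ j, (M k i * M j l) • V i j) z := by
  simp only [dotMat, mul_apply, of_apply, dot3, Fin.sum_univ_two, Fin.sum_univ_three, Pi.add_apply,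
    Pi.smul_apply, smul_eq_mul]
  ring

lemma sum_frob_mul_components_mul (M : Matrix (Fin 2) (Fin 2) ℝ)
    (V : Fin 2 → Fin 2 → Fin 3 → ℝ) (t : Fin 2 → Fin 3 → ℝ) (hc : t 0 ⨯₃ t 1 ≠ 0) :
    ∑ m, frob (M * of (fun i j => V i j m) * M) (M * of (fun i j => V i j m) * M)
      = frob (M * dotMat V ((norm3 (t 0 ⨯₃ t 1))⁻¹ • t 0 ⨯₃ t 1) * M)
          (M * dotMat V ((norm3 (t 0 ⨯₃ t 1))⁻¹ • t 0 ⨯₃ t 1) * M)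
        + tangentialPart (gram3 t) (fun κ => dotMat V (t κ)) M := by
  set W : Fin 2 → Fin 2 → Fin 3 → ℝ := fun k l => ∑ i, ∑ j, (M k i * M j l) • V i j
  have hcomp : ∀ m k l, (M * of (fun i j => V i j m) * M) k l = W k l m := fun m k l => by
    have hsingle : of (fun i j => V i j m) = dotMat V (Pi.single m 1) := by
      ext i j; exact (dotProduct_single_one (V i j) m).symm
    rw [hsingle, mul_dotMat_mul_apply]
    exact dotProduct_single_one (W k l) m
  calc ∑ m, frob (M * of (fun i j => V i j m) * M) (M * of (fun i j => V i j m) * M)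
      = ∑ k, ∑ l, dot3 (W k l) (W k l) := by
        simp only [frob, hcomp, dot3]
        rw [Finset.sum_comm]
        exact Finset.sum_congr rfl fun k _ => Finset.sum_comm
    _ = _ := by
        simp only [frob, tangentialPart, mul_dotMat_mul_apply, ← Finset.sum_add_distrib, ← sq]
        exact Finset.sum_congr rfl fun k _ => Finset.sum_congr rfl fun l _ =>
          dot3_self_eq_sq_dot3_normal_add t hc (W k l)

lemma met_eq_gram3 (ψ : (Fin 2 → ℝ) → (Fin 3 → ℝ)) (x : Fin 2 → ℝ) :
    met ψ x = gram3 (fun i => pd ψ i x) := by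
  ext i j
  simp [met, mul_apply, jac, gram3, dot3]

/-- Christoffel symbols of the first kind: `christoffel ψ x k i j = ∂ᵢ∂ⱼψ(x) · ∂ₖψ(x)`. -/
def christoffel (ψ : (Fin 2 → ℝ) → (Fin 3 → ℝ)) (x : Fin 2 → ℝ) (k : Fin 2) :
    Matrix (Fin 2) (Fin 2) ℝ :=
  dotMat (fun i j => pd2 ψ i j x) (pd ψ k x)

lemma sum_frob_mul_hess_mul (ψ : (Fin 2 → ℝ) → (Fin 3 → ℝ)) (x : Fin 2 → ℝ)
    (hc : crossPsi ψ x ≠ 0) (M : Matrix (Fin 2) (Fin 2) ℝ) :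
    ∑ m, frob (M * hess ψ m x * M) (M * hess ψ m x * M)
      = frob (M * sff ψ x * M) (M * sff ψ x * M)
        + tangentialPart (met ψ x) (christoffel ψ x) M := by
  rw [met_eq_gram3]
  exact sum_frob_mul_components_mul M (fun i j => pd2 ψ i j x) (fun i => pd ψ i x) hc

lemma fderiv_dotProduct_apply {E ι : Type*} [NormedAddCommGroup E] [NormedSpace ℝ E]
    [Fintype ι] {f g : E → ι → ℝ} {x : E} (hf : DifferentiableAt ℝ f x)
    (hg : DifferentiableAt ℝ g x) (v : E) :
    fderiv ℝ (fun y => f y ⬝ᵥ g y) x v = fderiv ℝ f x v ⬝ᵥ g x + f x ⬝ᵥ fderiv ℝ g x v := by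
  have hfg := HasFDerivAt.fun_sum (u := Finset.univ) fun i _ =>
    (hasFDerivAt_pi'.1 hf.hasFDerivAt i).fun_mul (hasFDerivAt_pi'.1 hg.hasFDerivAt i)
  rw [show (fun y => f y ⬝ᵥ g y) = fun y => ∑ i, f y i * g y i from rfl, hfg.fderiv]
  simp [dotProduct, Finset.sum_add_distrib, mul_comm, add_comm]

section SecondOrder

variable {ψ : (Fin 2 → ℝ) → (Fin 3 → ℝ)} {x : Fin 2 → ℝ}

lemma differentiableAt_pd (hψ : ContDiffAt ℝ 2 ψ x) (i : Fin 2) :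
    DifferentiableAt ℝ (pd ψ i) x :=
  ((hψ.fderiv_right (m := 1) le_rfl).differentiableAt one_ne_zero).clm_apply
    (differentiableAt_const _)

lemma pd2_comm (hψ : ContDiffAt ℝ 2 ψ x) (i j : Fin 2) : pd2 ψ i j x = pd2 ψ j i x := by
  have hd : DifferentiableAt ℝ (fderiv ℝ ψ) x :=
    (hψ.fderiv_right (m := 1) le_rfl).differentiableAt one_ne_zero
  have hpd2 : ∀ a b : Fin 2,
      pd2 ψ a b x = fderiv ℝ (fderiv ℝ ψ) x (Pi.single a 1) (Pi.single b 1) := fun a b => by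
    change fderiv ℝ (fun y => fderiv ℝ ψ y (Pi.single b 1)) x (Pi.single a 1) = _
    rw [fderiv_clm_apply hd (differentiableAt_const _)]
    simp
  rw [hpd2, hpd2, hψ.isSymmSndFDerivAt (by simp)]

lemma fderiv_met_apply (hψ : ContDiffAt ℝ 2 ψ x) (a b i : Fin 2) :
    fderiv ℝ (fun y => met ψ y a b) x (Pi.single i 1)
      = christoffel ψ x b i a + christoffel ψ x a i b := by
  have hmet : (fun y => met ψ y a b) = fun y => pd ψ a y ⬝ᵥ pd ψ b y :=
    funext fun y => by rw [met_eq_gram3]; rfl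
  rw [hmet, fderiv_dotProduct_apply (differentiableAt_pd hψ a) (differentiableAt_pd hψ b),
    dotProduct_comm (pd ψ a x)]
  rfl

lemma two_mul_christoffel (hψ : ContDiffAt ℝ 2 ψ x) (i j k : Fin 2) :
    2 * christoffel ψ x k i j
      = fderiv ℝ (fun y => met ψ y j k) x (Pi.single i 1)
        + fderiv ℝ (fun y => met ψ y i k) x (Pi.single j 1)
        - fderiv ℝ (fun y => met ψ y i j) x (Pi.single k 1) := by
  have hsymm : ∀ a b c : Fin 2, christoffel ψ x c a b = christoffel ψ x c b a := fun a b c => by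
    simp only [christoffel, dotMat, of_apply, pd2_comm hψ a b]
  rw [fderiv_met_apply hψ, fderiv_met_apply hψ, fderiv_met_apply hψ, hsymm j i k, hsymm k i j,
    hsymm k j i]
  ring

end SecondOrder

lemma christoffel_eq_of_met_eq {ψA ψB : (Fin 2 → ℝ) → (Fin 3 → ℝ)} {x : Fin 2 → ℝ}
    (hA : ContDiffAt ℝ 2 ψA x) (hB : ContDiffAt ℝ 2 ψB x) (hmet : met ψB =ᶠ[nhds x] met ψA) :
    christoffel ψB x = christoffel ψA x := by
  have hmet' : ∀ a b : Fin 2, (fun y => met ψB y a b) =ᶠ[nhds x] fun y => met ψA y a b :=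
    fun a b => hmet.mono fun y hy => congrFun (congrFun hy a) b
  ext k i j
  have hB' := two_mul_christoffel hB i j k
  rw [(hmet' j k).fderiv_eq, (hmet' i k).fderiv_eq, (hmet' i j).fderiv_eq,
    ← two_mul_christoffel hA] at hB'
  linarith

section Frobenius

variable {n : Type*} [Fintype n]

lemma frob_sub_sub (X Y : Matrix n n ℝ) :
    frob (X - Y) (X - Y) = frob X X - 2 * frob X Y + frob Y Y := by
  have hsq : ∀ i j,
      (X - Y) i j * (X - Y) i j = X i j * X i j - 2 * (X i j * Y i j) + Y i j * Y i j :=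
    fun i j => by rw [Matrix.sub_apply]; ring
  simp only [frob, hsq, Finset.sum_add_distrib, Finset.sum_sub_distrib, Finset.mul_sum]

lemma frob_eq_trace (A B : Matrix n n ℝ) : frob A B = (Aᵀ * B).trace := by
  simp only [frob, trace, diag, mul_apply, transpose_apply]
  exact Finset.sum_comm

lemma frob_mul_mul_of_transpose_eq {M : Matrix n n ℝ} (hM : Mᵀ = M) (A B : Matrix n n ℝ) :
    frob (M * A * M) (M * B * M) = frob A (M * M * B * (M * M)) := by
  rw [frob_eq_trace, frob_eq_trace, transpose_mul, transpose_mul, hM]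
  calc (M * (Aᵀ * M) * (M * B * M)).trace = (M * (Aᵀ * M * (M * B * M))).trace := by
        simp only [Matrix.mul_assoc]
    _ = (Aᵀ * M * (M * B * M) * M).trace := trace_mul_comm _ _
    _ = (Aᵀ * (M * M * B * (M * M))).trace := by simp only [Matrix.mul_assoc]

end Frobenius

/-- pointwise form of Proposition 2.1, the transformed bending
energy density. Here `s` is the unique positive definite square root of
`g = g[ψ_A](x)`, so `s⁻¹ = g^{-1/2}`. -/
theorem transformed_bending_energy_density
    (ω : Set (Fin 2 → ℝ)) (hω : IsOpen ω)
    (ψA ψB : (Fin 2 → ℝ) → (Fin 3 → ℝ))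
    (hA : ContDiffOn ℝ 2 ψA ω) (hB : ContDiffOn ℝ 2 ψB ω)
    (hmet : ∀ y ∈ ω, met ψB y = met ψA y)
    (x : Fin 2 → ℝ) (hx : x ∈ ω)
    (hcA : crossPsi ψA x ≠ 0) (hcB : crossPsi ψB x ≠ 0)
    (s : Matrix (Fin 2) (Fin 2) ℝ) (hs : s.PosDef) (hss : s * s = met ψA x) :
    frob (s⁻¹ * (sff ψB x - sff ψA x) * s⁻¹)
         (s⁻¹ * (sff ψB x - sff ψA x) * s⁻¹)
      = (∑ m, frob (s⁻¹ * hess ψB m x * s⁻¹) (s⁻¹ * hess ψB m x * s⁻¹))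
        - 2 * frob (sff ψB x) ((met ψA x)⁻¹ * sff ψA x * (met ψA x)⁻¹)
        + (2 * frob (s⁻¹ * sff ψA x * s⁻¹) (s⁻¹ * sff ψA x * s⁻¹)
            - ∑ m, frob (s⁻¹ * hess ψA m x * s⁻¹) (s⁻¹ * hess ψA m x * s⁻¹)) := by
  have hΓ : christoffel ψB x = christoffel ψA x :=
    christoffel_eq_of_met_eq (hA.contDiffAt (hω.mem_nhds hx)) (hB.contDiffAt (hω.mem_nhds hx))
      (Filter.eventually_of_mem (hω.mem_nhds hx) hmet)
  have hsymm : (s⁻¹)ᵀ = s⁻¹ := by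
    simpa [conjTranspose_eq_transpose_of_trivial] using hs.inv.isHermitian.eq
  have hginv : (met ψA x)⁻¹ = s⁻¹ * s⁻¹ := by rw [← hss, Matrix.mul_inv_rev]
  rw [mul_sub, sub_mul, frob_sub_sub, sum_frob_mul_hess_mul ψB x hcB,
    sum_frob_mul_hess_mul ψA x hcA, hmet x hx, hΓ, hginv,
    frob_mul_mul_of_transpose_eq hsymm (sff ψB x) (sff ψA x)]
  ring

end
end

section
/- First variation of the unit normal: Let ψ, v : ℝ² → ℝ³ be differentiable at x ∈ ℝ² with ∂₁ψ(x) × ∂₂ψ(x) ≠ 0. Then the map t ↦ n[ψ + t v](x) is differentiable at t = 0 with derivative −∇ψ(x) · (g[ψ](x))⁻¹ · (∇v(x))ᵀ · n[ψ](x), i.e. the 3×2 matrix ∇ψ(x) times the inverse 2×2 metric times the 2×3 matrix (∇v(x))ᵀ applied to the vector n[ψ](x), with a minus sign. -/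
/-! The cross product of the varied frame is `c + t c' + O(t²)` with `c = ∂₁ψ × ∂₂ψ` and
`c' = ∂₁ψ × ∂₂v + ∂₁v × ∂₂ψ`, so the normal moves with velocity `(c' - (n · c') n) / |c|`, the
tangential part of `c' / |c|`. On the other side, the triple product identities give
`(∇v)ᵀ c = -(∇ψ)ᵀ c'`, and `∇ψ · adj g · (∇ψ)ᵀ = |c|² - c cᵀ` with `det g = |c|²` (Lagrange's
identity), so `-∇ψ g⁻¹ (∇v)ᵀ n` is the same tangential part. -/

open Matrix MeasureTheory

noncomputable section

lemma hasDerivAt_crossProduct {𝕜 : Type*} [NontriviallyNormedField 𝕜] [CompleteSpace 𝕜]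
    {u v : 𝕜 → Fin 3 → 𝕜} {u' v' : Fin 3 → 𝕜} {t : 𝕜}
    (hu : HasDerivAt u u' t) (hv : HasDerivAt v v' t) :
    HasDerivAt (fun s => u s ⨯₃ v s) (u t ⨯₃ v' + u' ⨯₃ v t) t :=
  (crossProduct : (Fin 3 → 𝕜) →ₗ[𝕜] _ →ₗ[𝕜] _).toContinuousBilinearMap.hasDerivAt_of_bilinear
    (fun _ => hu) (fun _ => hv)

lemma hasDerivAt_dot3 {u v : ℝ → Fin 3 → ℝ} {u' v' : Fin 3 → ℝ} {t : ℝ}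
    (hu : HasDerivAt u u' t) (hv : HasDerivAt v v' t) :
    HasDerivAt (fun s => dot3 (u s) (v s)) (dot3 (u t) v' + dot3 u' (v t)) t := by
  refine (HasDerivAt.fun_sum fun m _ =>
    (hasDerivAt_pi.1 hu m).mul (hasDerivAt_pi.1 hv m)).congr_deriv ?_
  rw [dot3, dot3, ← Finset.sum_add_distrib]
  exact Finset.sum_congr rfl fun m _ => add_comm _ _

lemma dot3_self_pos {u : Fin 3 → ℝ} (h : u ≠ 0) : 0 < dot3 u u := by
  obtain ⟨m, hm⟩ := Function.ne_iff.mp h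
  exact Finset.sum_pos' (fun i _ => mul_self_nonneg _) ⟨m, Finset.mem_univ m, mul_self_pos.2 hm⟩

lemma hasDerivAt_normalize {w : ℝ → Fin 3 → ℝ} {w' : Fin 3 → ℝ} {t : ℝ}
    (hw : HasDerivAt w w' t) (h : w t ≠ 0) :
    HasDerivAt (fun s => (norm3 (w s))⁻¹ • w s)
      ((norm3 (w t))⁻¹ • w' - (dot3 (w t) w' / norm3 (w t) ^ 3) • w t) t := by
  have hpos : 0 < dot3 (w t) (w t) := dot3_self_pos h
  have hnorm_pos : 0 < norm3 (w t) := Real.sqrt_pos.2 hpos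
  have hnorm : HasDerivAt (fun s => norm3 (w s)) (dot3 (w t) w' / norm3 (w t)) t := by
    refine ((hasDerivAt_dot3 hw hw).sqrt hpos.ne').congr_deriv ?_
    rw [show dot3 w' (w t) = dot3 (w t) w' from dotProduct_comm _ _, norm3]
    ring
  refine ((hnorm.inv hnorm_pos.ne').smul hw).congr_deriv ?_
  rw [sub_eq_add_neg, ← neg_smul]
  congr 2
  field_simp

lemma pd_add_smul {ψ v : (Fin 2 → ℝ) → (Fin 3 → ℝ)} {x : Fin 2 → ℝ}
    (hψ : DifferentiableAt ℝ ψ x) (hv : DifferentiableAt ℝ v x) (t : ℝ) (i : Fin 2) :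
    pd (fun y => ψ y + t • v y) i x = pd ψ i x + t • pd v i x := by
  rw [pd, fderiv_fun_add hψ (hv.fun_const_smul t), fderiv_fun_const_smul hv t]
  rfl

lemma hasDerivAt_crossPsi_add_smul {ψ v : (Fin 2 → ℝ) → (Fin 3 → ℝ)} {x : Fin 2 → ℝ}
    (hψ : DifferentiableAt ℝ ψ x) (hv : DifferentiableAt ℝ v x) :
    HasDerivAt (fun t : ℝ => crossPsi (fun y => ψ y + t • v y) x)
      (pd ψ 0 x ⨯₃ pd v 1 x + pd v 0 x ⨯₃ pd ψ 1 x) 0 := by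
  have line (a p : Fin 3 → ℝ) : HasDerivAt (fun t : ℝ => a + t • p) p 0 := by
    simpa using ((hasDerivAt_id (0 : ℝ)).smul_const p).const_add a
  simpa [crossPsi, pd_add_smul hψ hv] using
    hasDerivAt_crossProduct (line (pd ψ 0 x) (pd v 0 x)) (line (pd ψ 1 x) (pd v 1 x))

section Gram

variable {R : Type*} [CommRing R]

lemma det_gram_eq_cross_dot_cross (a b : Fin 3 → R) :
    (of ![a, b] * (of ![a, b])ᵀ).det = a ⨯₃ b ⬝ᵥ a ⨯₃ b := by
  rw [det_fin_two, cross_dot_cross]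
  simp [mul_apply, dotProduct]

lemma of_mulVec_cross (a b p q : Fin 3 → R) :
    of ![p, q] *ᵥ (a ⨯₃ b) = -(of ![a, b] *ᵥ (a ⨯₃ q + p ⨯₃ b)) := by
  ext i
  fin_cases i
  · change p ⬝ᵥ a ⨯₃ b = -(a ⬝ᵥ (a ⨯₃ q + p ⨯₃ b))
    rw [dotProduct_add, dot_self_cross, zero_add, triple_product_permutation a p b,
      ← cross_anticomm a b, dotProduct_neg, neg_neg]
  · change q ⬝ᵥ a ⨯₃ b = -(b ⬝ᵥ (a ⨯₃ q + p ⨯₃ b))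
    rw [dotProduct_add, dot_cross_self, add_zero, triple_product_permutation b a q,
      triple_product_permutation a q b, ← cross_anticomm a b, dotProduct_neg, neg_neg]

lemma transpose_mul_adjugate_gram_mul_mulVec (a b u : Fin 3 → R) :
    ((of ![a, b])ᵀ * (of ![a, b] * (of ![a, b])ᵀ).adjugate * of ![a, b]) *ᵥ u
      = (a ⨯₃ b ⬝ᵥ a ⨯₃ b) • u - (a ⨯₃ b ⬝ᵥ u) • a ⨯₃ b := by
  ext m
  fin_cases m <;>
  · simp only [mulVec, dotProduct, Nat.succ_eq_add_one, Nat.reduceAdd, cons_mul, empty_mul,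
      Equiv.symm_apply_apply, adjugate_fin_two, Fin.isValue, of_apply, cons_val', vecMul,
      transpose_apply, cons_val_fin_one, cons_val_one, Fin.sum_univ_three, cons_val_zero,
      neg_add_rev, Fin.zero_eta, Fin.mk_one, Fin.reduceFinMk, mul_apply, Fin.sum_univ_two,
      cross_apply, cons_val, smul_cons, smul_eq_mul, smul_empty, Pi.sub_apply, Pi.smul_apply]
    ring

end Gram

lemma jac_eq_transpose (ψ : (Fin 2 → ℝ) → (Fin 3 → ℝ)) (x : Fin 2 → ℝ) :
    jac ψ x = (of ![pd ψ 0 x, pd ψ 1 x])ᵀ := by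
  ext m i
  fin_cases i <;> rfl

lemma met_eq_mul_transpose (ψ : (Fin 2 → ℝ) → (Fin 3 → ℝ)) (x : Fin 2 → ℝ) :
    met ψ x = of ![pd ψ 0 x, pd ψ 1 x] * (of ![pd ψ 0 x, pd ψ 1 x])ᵀ := by
  rw [met, jac_eq_transpose, transpose_transpose]

lemma neg_jac_mul_inv_met_mul_jac_transpose_mulVec_nrm {ψ : (Fin 2 → ℝ) → (Fin 3 → ℝ)}
    (v : (Fin 2 → ℝ) → (Fin 3 → ℝ)) {x : Fin 2 → ℝ} (hc : crossPsi ψ x ≠ 0) :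
    -((jac ψ x * (met ψ x)⁻¹ * (jac v x)ᵀ) *ᵥ nrm ψ x) =
      (norm3 (crossPsi ψ x))⁻¹ • (pd ψ 0 x ⨯₃ pd v 1 x + pd v 0 x ⨯₃ pd ψ 1 x) -
        (dot3 (crossPsi ψ x) (pd ψ 0 x ⨯₃ pd v 1 x + pd v 0 x ⨯₃ pd ψ 1 x) /
          norm3 (crossPsi ψ x) ^ 3) • crossPsi ψ x := by
  have hdet : (met ψ x).det = dot3 (crossPsi ψ x) (crossPsi ψ x) := by
    rw [met_eq_mul_transpose]
    exact det_gram_eq_cross_dot_cross _ _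
  have hdot (u w : Fin 3 → ℝ) : u ⬝ᵥ w = dot3 u w := rfl
  have hs : norm3 (crossPsi ψ x) ^ 2 = dot3 (crossPsi ψ x) (crossPsi ψ x) :=
    Real.sq_sqrt (dot3_self_pos hc).le
  have hs0 : norm3 (crossPsi ψ x) ≠ 0 := (Real.sqrt_pos.2 (dot3_self_pos hc)).ne'
  rw [inv_def, hdet, ← hs, Ring.inverse_eq_inv', met_eq_mul_transpose, jac_eq_transpose,
    jac_eq_transpose, transpose_transpose, nrm, Matrix.mul_smul, Matrix.smul_mul, smul_mulVec,
    mulVec_smul, ← mulVec_mulVec, crossPsi, of_mulVec_cross, mulVec_neg, mulVec_mulVec,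
    transpose_mul_adjugate_gram_mul_mulVec, hdot, hdot, ← crossPsi, ← hs]
  ext m
  simp only [Pi.neg_apply, Pi.smul_apply, Pi.sub_apply, smul_eq_mul]
  field_simp

/-- First variation of the unit normal:
`t ↦ n[ψ + t v](x)` is differentiable at `t = 0` with derivative
`−∇ψ(x) (g[ψ](x))⁻¹ (∇v(x))ᵀ n[ψ](x)`. -/
theorem first_variation_normal
    (ψ v : (Fin 2 → ℝ) → (Fin 3 → ℝ)) (x : Fin 2 → ℝ)
    (hψ : DifferentiableAt ℝ ψ x) (hv : DifferentiableAt ℝ v x)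
    (hc : crossPsi ψ x ≠ 0) :
    HasDerivAt (fun t : ℝ => nrm (fun y => ψ y + t • v y) x)
      (-((jac ψ x * (met ψ x)⁻¹ * (jac v x)ᵀ) *ᵥ nrm ψ x)) 0 := by
  have hψ0 : (fun y => ψ y + (0 : ℝ) • v y) = ψ := by simp
  have hnormal := hasDerivAt_normalize (hasDerivAt_crossPsi_add_smul hψ hv) (by rwa [hψ0])
  rw [neg_jac_mul_inv_met_mul_jac_transpose_mulVec_nrm v hc]
  rwa [hψ0] at hnormal

end
end

section
/- Second variation of the unit normal: Let ψ, v, w : ℝ² → ℝ³ be differentiable at x ∈ ℝ² with ∂₁ψ(x) × ∂₂ψ(x) ≠ 0, and let N(t,s) = n[ψ + t v + s w](x), defined for (t,s) near (0,0). Then the mixed second partial derivative ∂ₛ∂ₜ N(0,0) equals −∇w g⁻¹ (∇v)ᵀ n − ∇ψ δg⁻¹(w) (∇v)ᵀ n − ∇ψ g⁻¹ (∇v)ᵀ δn(w), where all Jacobians are evaluated at x, g = g[ψ](x), n = n[ψ](x), δg⁻¹(w) = −g⁻¹((∇w)ᵀ∇ψ + (∇ψ)ᵀ∇w)g⁻¹,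 and δn(w) = −∇ψ g⁻¹ (∇w)ᵀ n. -/
/-!
Write `N(t, s) = n(A + t V + s W)` with `A = ∇ψ(x)`, `V = ∇v(x)`, `W = ∇w(x)`, where `n(A)` is the
normalized cross product `c = a₀ × a₁` of the columns of `A`. The first variation is
`d/dt n(A + t B)|₀ = -A (AᵀA)⁻¹ Bᵀ n(A)`: the derivative `c'` of the cross product satisfies
`Aᵀ c' = -Bᵀ c` by the triple product identity, and the part of `c'` orthogonal to `c` is
`A (AᵀA)⁻¹ Aᵀ c'`, because `a₀, a₁, c` span `ℝ³`. Differentiating this formula in the direction `W`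
by the product rule, with `(G⁻¹)' = -G⁻¹ G' G⁻¹`, gives the three terms of the second variation.
-/

open Matrix MeasureTheory

noncomputable section

-- These norms induce the product topology, so they only make the calculus rules available.
attribute [local instance] Matrix.linftyOpNormedAddCommGroup Matrix.linftyOpNormedSpace
  Matrix.linftyOpNormedRing Matrix.linftyOpNormedAlgebra

section MatrixCalculus

variable {l m n : Type*} [Fintype l] [Fintype m] [Fintype n] {t : ℝ}

theorem HasDerivAt.matrix_mul {A : ℝ → Matrix l m ℝ} {B : ℝ → Matrix m n ℝ}
    {A' : Matrix l m ℝ} {B' : Matrix m n ℝ} (hA : HasDerivAt A A' t) (hB : HasDerivAt B B' t) :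
    HasDerivAt (fun s => A s * B s) (A' * B t + A t * B') t := by
  have := (mulLinearMap ℝ : Matrix l m ℝ →ₗ[ℝ] Matrix m n ℝ →ₗ[ℝ] Matrix l n ℝ)
    |>.toContinuousBilinearMap.hasDerivAt_of_bilinear (fun _ => hA) (fun _ => hB)
  rwa [add_comm] at this

theorem HasDerivAt.matrix_mulVec {A : ℝ → Matrix m n ℝ} {u : ℝ → n → ℝ}
    {A' : Matrix m n ℝ} {u' : n → ℝ} (hA : HasDerivAt A A' t) (hu : HasDerivAt u u' t) :
    HasDerivAt (fun s => A s *ᵥ u s) (A' *ᵥ u t + A t *ᵥ u') t := by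
  have := (mulVecBilin ℝ ℝ : Matrix m n ℝ →ₗ[ℝ] _)
    |>.toContinuousBilinearMap.hasDerivAt_of_bilinear (fun _ => hA) (fun _ => hu)
  rwa [add_comm] at this

theorem HasDerivAt.matrix_inv [DecidableEq n] {G : ℝ → Matrix n n ℝ} {G' : Matrix n n ℝ}
    (hG : HasDerivAt G G' t) (hdet : IsUnit (G t).det) :
    HasDerivAt (fun s => (G s)⁻¹) (-((G t)⁻¹ * G' * (G t)⁻¹)) t := by
  have h := (hasFDerivAt_ringInverse (𝕜 := ℝ) ((G t).nonsingInvUnit hdet)).comp_hasDerivAt t hG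
  simp only [Function.comp_def, ← nonsing_inv_eq_ringInverse] at h
  rwa [_root_.neg_apply, ContinuousLinearMap.mulLeftRight_apply] at h

theorem HasDerivAt.dotProduct {f g : ℝ → n → ℝ} {f' g' : n → ℝ}
    (hf : HasDerivAt f f' t) (hg : HasDerivAt g g' t) :
    HasDerivAt (fun s => f s ⬝ᵥ g s) (f' ⬝ᵥ g t + f t ⬝ᵥ g') t := by
  have := (dotProductBilin ℝ ℝ : (n → ℝ) →ₗ[ℝ] _)
    |>.toContinuousBilinearMap.hasDerivAt_of_bilinear (fun _ => hf) (fun _ => hg)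
  rwa [add_comm] at this

theorem HasDerivAt.crossProduct {f g : ℝ → Fin 3 → ℝ} {f' g' : Fin 3 → ℝ}
    (hf : HasDerivAt f f' t) (hg : HasDerivAt g g' t) :
    HasDerivAt (fun s => f s ⨯₃ g s) (f' ⨯₃ g t + f t ⨯₃ g') t := by
  have := (_root_.crossProduct (R := ℝ)).toContinuousBilinearMap.hasDerivAt_of_bilinear
    (fun _ => hf) (fun _ => hg)
  rwa [add_comm] at this

end MatrixCalculus

theorem hasDerivAt_const_add_smul {E : Type*} [NormedAddCommGroup E] [NormedSpace ℝ E]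
    (a b : E) (t : ℝ) : HasDerivAt (fun s : ℝ => a + s • b) b t := by
  simpa using ((hasDerivAt_id' t).smul_const b).const_add a

theorem dotProduct_self_pos_of_ne_zero {n : Type*} [Fintype n] {u : n → ℝ} (hu : u ≠ 0) :
    0 < u ⬝ᵥ u := by
  simpa using dotProduct_star_self_pos_iff.2 hu

theorem norm3_sq (u : Fin 3 → ℝ) : norm3 u ^ 2 = u ⬝ᵥ u :=
  Real.sq_sqrt (dotProduct_star_self_nonneg u)

theorem norm3_pos {u : Fin 3 → ℝ} (hu : u ≠ 0) : 0 < norm3 u :=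
  Real.sqrt_pos.2 (dotProduct_self_pos_of_ne_zero hu)

theorem HasDerivAt.norm3_comp {f : ℝ → Fin 3 → ℝ} {f' : Fin 3 → ℝ} {t : ℝ}
    (hf : HasDerivAt f f' t) (h0 : f t ≠ 0) :
    HasDerivAt (fun s => norm3 (f s)) (f t ⬝ᵥ f' / norm3 (f t)) t := by
  have h := (hf.dotProduct hf).sqrt (dotProduct_self_pos_of_ne_zero h0).ne'
  rwa [dotProduct_comm f', ← two_mul, mul_div_mul_left _ _ two_ne_zero] at h

theorem HasDerivAt.inv_norm3_smul {f : ℝ → Fin 3 → ℝ} {f' : Fin 3 → ℝ} {t : ℝ}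
    (hf : HasDerivAt f f' t) (h0 : f t ≠ 0) :
    HasDerivAt (fun s => (norm3 (f s))⁻¹ • f s)
      ((norm3 (f t))⁻¹ • (f' - (f t ⬝ᵥ f' / f t ⬝ᵥ f t) • f t)) t := by
  have hN := norm3_pos h0
  have hderiv : (norm3 (f t))⁻¹ • (f' - (f t ⬝ᵥ f' / f t ⬝ᵥ f t) • f t)
      = (norm3 (f t))⁻¹ • f' + (-(f t ⬝ᵥ f' / norm3 (f t)) / norm3 (f t) ^ 2) • f t := by
    rw [← norm3_sq, smul_sub, smul_smul, sub_eq_add_neg, ← neg_smul]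
    congr 2
    field_simp
  rw [hderiv]
  exact ((hf.norm3_comp h0).inv hN.ne').smul hf

def colCross (A : Matrix (Fin 3) (Fin 2) ℝ) : Fin 3 → ℝ := Aᵀ 0 ⨯₃ Aᵀ 1

def unitNormal (A : Matrix (Fin 3) (Fin 2) ℝ) : Fin 3 → ℝ :=
  (norm3 (colCross A))⁻¹ • colCross A

theorem nrm_eq_unitNormal_jac (ψ : (Fin 2 → ℝ) → (Fin 3 → ℝ)) (x : Fin 2 → ℝ) :
    nrm ψ x = unitNormal (jac ψ x) := rfl

theorem transpose_mulVec_colCross (A : Matrix (Fin 3) (Fin 2) ℝ) : Aᵀ *ᵥ colCross A = 0 := by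
  ext i
  fin_cases i
  exacts [dot_self_cross _ _, dot_cross_self _ _]

theorem det_transpose_mul_self (A : Matrix (Fin 3) (Fin 2) ℝ) :
    (Aᵀ * A).det = colCross A ⬝ᵥ colCross A := by
  rw [colCross, cross_dot_cross, det_fin_two]
  rfl

theorem eq_zero_of_orthogonal_columns_colCross {A : Matrix (Fin 3) (Fin 2) ℝ} {z : Fin 3 → ℝ}
    (hA : colCross A ≠ 0) (hcol : Aᵀ *ᵥ z = 0) (hnormal : colCross A ⬝ᵥ z = 0) : z = 0 := by
  have h0 : Aᵀ 0 ⬝ᵥ z = 0 := congrFun hcol 0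
  have h1 : Aᵀ 1 ⬝ᵥ z = 0 := congrFun hcol 1
  have hcross : colCross A ⨯₃ z = 0 := by
    rw [colCross, cross_cross_eq_smul_sub_smul, h0, h1, zero_smul, zero_smul, sub_zero]
  have hlagrange := cross_dot_cross (colCross A) z (colCross A) z
  rw [hcross, zero_dotProduct, dotProduct_comm z, hnormal, zero_mul, sub_zero, eq_comm,
    mul_eq_zero] at hlagrange
  exact dotProduct_self_eq_zero.1 (hlagrange.resolve_left (dotProduct_self_pos_of_ne_zero hA).ne')

def colCrossDeriv (A B : Matrix (Fin 3) (Fin 2) ℝ) : Fin 3 → ℝ := Bᵀ 0 ⨯₃ Aᵀ 1 + Aᵀ 0 ⨯₃ Bᵀ 1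

theorem hasDerivAt_colCross_add_smul (A B : Matrix (Fin 3) (Fin 2) ℝ) :
    HasDerivAt (fun t : ℝ => colCross (A + t • B)) (colCrossDeriv A B) 0 := by
  have h := (hasDerivAt_const_add_smul (Aᵀ 0) (Bᵀ 0) 0).crossProduct
    (hasDerivAt_const_add_smul (Aᵀ 1) (Bᵀ 1) 0)
  simp only [zero_smul, add_zero] at h
  exact h

theorem transpose_mulVec_colCrossDeriv (A B : Matrix (Fin 3) (Fin 2) ℝ) :
    Aᵀ *ᵥ colCrossDeriv A B = -(Bᵀ *ᵥ colCross A) := by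
  ext i
  fin_cases i
  · show Aᵀ 0 ⬝ᵥ (Bᵀ 0 ⨯₃ Aᵀ 1 + Aᵀ 0 ⨯₃ Bᵀ 1) = -(Bᵀ 0 ⬝ᵥ Aᵀ 0 ⨯₃ Aᵀ 1)
    rw [dotProduct_add, dot_self_cross, add_zero, triple_product_permutation, ← cross_anticomm,
      dotProduct_neg]
  · show Aᵀ 1 ⬝ᵥ (Bᵀ 0 ⨯₃ Aᵀ 1 + Aᵀ 0 ⨯₃ Bᵀ 1) = -(Bᵀ 1 ⬝ᵥ Aᵀ 0 ⨯₃ Aᵀ 1)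
    rw [dotProduct_add, dot_cross_self, zero_add, ← triple_product_permutation, ← cross_anticomm,
      dotProduct_neg]

theorem isUnit_det_transpose_mul_self {A : Matrix (Fin 3) (Fin 2) ℝ} (hA : colCross A ≠ 0) :
    IsUnit (Aᵀ * A).det := by
  rw [det_transpose_mul_self]
  exact (dotProduct_self_pos_of_ne_zero hA).ne'.isUnit

/-- Both sides are orthogonal to `colCross A` and have the same inner products with the columns
of `A`. -/
theorem colCrossDeriv_sub_smul_colCross (A B : Matrix (Fin 3) (Fin 2) ℝ) (hA : colCross A ≠ 0) :
    colCrossDeriv A B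
        - (colCross A ⬝ᵥ colCrossDeriv A B / colCross A ⬝ᵥ colCross A) • colCross A
      = -(A * (Aᵀ * A)⁻¹ * Bᵀ) *ᵥ colCross A := by
  have hG : Aᵀ * A * (Aᵀ * A)⁻¹ = 1 := mul_nonsing_inv _ (isUnit_det_transpose_mul_self hA)
  have hcc : colCross A ⬝ᵥ colCross A ≠ 0 := (dotProduct_self_pos_of_ne_zero hA).ne'
  rw [← sub_eq_zero]
  apply eq_zero_of_orthogonal_columns_colCross hA
  · rw [mulVec_sub, mulVec_sub, mulVec_smul, transpose_mulVec_colCross,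
      transpose_mulVec_colCrossDeriv, neg_mulVec, mulVec_neg, mulVec_mulVec,
      ← Matrix.mul_assoc, ← Matrix.mul_assoc, hG, Matrix.one_mul, smul_zero, sub_zero,
      sub_neg_eq_add, neg_add_cancel]
  · rw [dotProduct_sub, dotProduct_sub, dotProduct_smul, smul_eq_mul, div_mul_cancel₀ _ hcc,
      sub_self, zero_sub, neg_mulVec, dotProduct_neg, Matrix.mul_assoc, ← mulVec_mulVec,
      dotProduct_mulVec, ← mulVec_transpose, transpose_mulVec_colCross, zero_dotProduct]
    exact neg_neg _

def unitNormalDeriv (A B : Matrix (Fin 3) (Fin 2) ℝ) : Fin 3 → ℝ :=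
  -(A * (Aᵀ * A)⁻¹ * Bᵀ) *ᵥ unitNormal A

theorem hasDerivAt_unitNormal_add_smul (A B : Matrix (Fin 3) (Fin 2) ℝ) (hA : colCross A ≠ 0) :
    HasDerivAt (fun t : ℝ => unitNormal (A + t • B)) (unitNormalDeriv A B) 0 := by
  have h := (hasDerivAt_colCross_add_smul A B).inv_norm3_smul (by simpa using hA)
  simp only [zero_smul, add_zero, colCrossDeriv_sub_smul_colCross A B hA] at h
  rwa [unitNormalDeriv, unitNormal, mulVec_smul]

theorem hasDerivAt_unitNormalDeriv_add_smul (A B W : Matrix (Fin 3) (Fin 2) ℝ)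
    (hA : colCross A ≠ 0) :
    HasDerivAt (fun s : ℝ => unitNormalDeriv (A + s • W) B)
      (-((W * (Aᵀ * A)⁻¹ * Bᵀ) *ᵥ unitNormal A)
        - ((A * (-((Aᵀ * A)⁻¹ * (Wᵀ * A + Aᵀ * W) * (Aᵀ * A)⁻¹)) * Bᵀ) *ᵥ unitNormal A)
        - ((A * (Aᵀ * A)⁻¹ * Bᵀ) *ᵥ (-((A * (Aᵀ * A)⁻¹ * Wᵀ) *ᵥ unitNormal A)))) 0 := by
  have hA' : HasDerivAt (fun s : ℝ => A + s • W) W 0 := hasDerivAt_const_add_smul A W 0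
  have hAt : HasDerivAt (fun s : ℝ => (A + s • W)ᵀ) Wᵀ 0 := by
    simp only [transpose_add, transpose_smul]
    exact hasDerivAt_const_add_smul Aᵀ Wᵀ 0
  have hGinv := (hAt.matrix_mul hA').matrix_inv (by simpa using isUnit_det_transpose_mul_self hA)
  refine (((hA'.matrix_mul hGinv).matrix_mul (hasDerivAt_const 0 Bᵀ)).neg.matrix_mulVec
    (hasDerivAt_unitNormal_add_smul A W hA)).congr_deriv ?_
  simp only [zero_smul, add_zero, Pi.neg_apply, Matrix.mul_zero, Matrix.add_mul, add_mulVec,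
    neg_mulVec, unitNormalDeriv, mulVec_neg, Matrix.zero_mul]
  abel

theorem jac_add {f g : (Fin 2 → ℝ) → (Fin 3 → ℝ)} {x : Fin 2 → ℝ}
    (hf : DifferentiableAt ℝ f x) (hg : DifferentiableAt ℝ g x) :
    jac (fun y => f y + g y) x = jac f x + jac g x := by
  ext m i
  simp [jac, pd, fderiv_fun_add hf hg]

theorem jac_const_smul {f : (Fin 2 → ℝ) → (Fin 3 → ℝ)} {x : Fin 2 → ℝ} (c : ℝ)
    (hf : DifferentiableAt ℝ f x) :
    jac (fun y => c • f y) x = c • jac f x := by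
  ext m i
  simp [jac, pd, fderiv_fun_const_smul hf]

/-- Second variation of the unit normal: with
`N(t,s) = n[ψ + tv + sw](x)`, the mixed second partial derivative
`∂ₛ∂ₜN(0,0)` equals
`−∇w g⁻¹ (∇v)ᵀ n − ∇ψ δg⁻¹(w) (∇v)ᵀ n − ∇ψ g⁻¹ (∇v)ᵀ δn(w)`. -/
theorem second_variation_normal
    (ψ v w : (Fin 2 → ℝ) → (Fin 3 → ℝ)) (x : Fin 2 → ℝ)
    (hψ : DifferentiableAt ℝ ψ x) (hv : DifferentiableAt ℝ v x)
    (hw : DifferentiableAt ℝ w x)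
    (hc : crossPsi ψ x ≠ 0) :
    HasDerivAt
      (fun s : ℝ =>
        deriv (fun t : ℝ => nrm (fun y => ψ y + t • v y + s • w y) x) 0)
      (-((jac w x * (met ψ x)⁻¹ * (jac v x)ᵀ) *ᵥ nrm ψ x)
        - ((jac ψ x *
            (-((met ψ x)⁻¹ * ((jac w x)ᵀ * jac ψ x + (jac ψ x)ᵀ * jac w x)
              * (met ψ x)⁻¹)) * (jac v x)ᵀ) *ᵥ nrm ψ x)
        - ((jac ψ x * (met ψ x)⁻¹ * (jac v x)ᵀ) *ᵥ
            (-((jac ψ x * (met ψ x)⁻¹ * (jac w x)ᵀ) *ᵥ nrm ψ x))))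
      0 := by
  have hc' : colCross (jac ψ x) ≠ 0 := hc
  have hN : ∀ s t : ℝ, nrm (fun y => ψ y + t • v y + s • w y) x
      = unitNormal (jac ψ x + s • jac w x + t • jac v x) := fun s t => by
    rw [nrm_eq_unitNormal_jac, jac_add (hψ.fun_add (hv.fun_const_smul t)) (hw.fun_const_smul s),
      jac_add hψ (hv.fun_const_smul t), jac_const_smul t hv, jac_const_smul s hw, add_right_comm]
  have hinner : (fun s : ℝ => deriv (fun t : ℝ => nrm (fun y => ψ y + t • v y + s • w y) x) 0)
      =ᶠ[nhds 0] fun s => unitNormalDeriv (jac ψ x + s • jac w x) (jac v x) := by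
    filter_upwards [(hasDerivAt_colCross_add_smul (jac ψ x) (jac w x)).continuousAt.eventually_ne
      (by simpa using hc')] with s hs
    simp only [hN s]
    exact (hasDerivAt_unitNormal_add_smul _ _ hs).deriv
  exact (hasDerivAt_unitNormalDeriv_add_smul _ _ _ hc').congr_of_eventuallyEq hinner

end
end
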